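/- The flat tetrahedrons tile the hyperplane without overlap: if a,b ∈ ℤ⁴, i,j,k are pairwise distinct, p,q,r are pairwise distinct, and π(T(a;i,j,k)) ≠ π(T(b;p,q,r)) as sets, then the relative interiors of π(T(a;i,j,k)) and π(T(b;p,q,r)) (i.e. their interiors within the 3-dimensional hyperplane H) are disjoint. -/

import Mathlib

/-!
Coordinate differences are unchanged by `π`, so with `l` the fourth index every point `x` of
`π(T(a;i,j,k))` satisfies `x l - a l ≤ x k - a k ≤ x j - a j ≤ x i - a i ≤ x l - a l + 1`.
None of these four linear inequalities is constant on the tetrahedron, so all four are strict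
on its relative interior. For `y` in the relative interior, `(y m - a m) - (y l - a l)` thus lies
in `[0, 1)`, so it is the fractional part of `y m - y l`; this fixes `a` up to a multiple of `𝟙`,
which `π` kills, and the order of these numbers fixes `(i, j, k)`. This needs the two tetrahedra
to share their fourth index; the relabelling `T(a;i,j,k) ↦ T(a - e_l; l,i,j)`, which leaves the
flat tetrahedron unchanged, arranges that.
-/

noncomputable section

/-- Ambient space ℝ⁴. -/
abbrev E4 := EuclideanSpace ℝ (Fin 4)

/-- Standard basis vector eᵢ of ℝ⁴. -/
def ee4 (i : Fin 4) : E4 := EuclideanSpace.single i 1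

/-- 𝟙 = e₁ + e₂ + e₃ + e₄. -/
def ones4 : E4 := ∑ i, ee4 i

/-- Orthogonal projection π onto the hyperplane H = {v ∈ ℝ⁴ : v₁+v₂+v₃+v₄ = 0},
    given by π(v) = v − ((v₁+v₂+v₃+v₄)/4)·𝟙. -/
def proj4 (v : E4) : E4 := v - ((∑ i, v i) / 4) • ones4

/-- A lattice point of ℤ⁴ viewed in ℝ⁴. -/
def toE4 (a : Fin 4 → ℤ) : E4 := WithLp.toLp 2 (fun n => (a n : ℝ))

/-- Slant tetrahedron T(a;i,j,k) = conv{a, a+eᵢ, a+eᵢ+eⱼ, a+eᵢ+eⱼ+e_k}. -/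
def slant4 (a : Fin 4 → ℤ) (i j k : Fin 4) : Set E4 :=
  convexHull ℝ {toE4 a, toE4 a + ee4 i, toE4 a + ee4 i + ee4 j,
    toE4 a + ee4 i + ee4 j + ee4 k}

/-- Flat tetrahedron: the image π(T(a;i,j,k)). -/
def flat4 (a : Fin 4 → ℤ) (i j k : Fin 4) : Set E4 := proj4 '' slant4 a i j k

open Topology in
theorem lt_of_mem_intrinsicInterior {E : Type*} [AddCommGroup E] [Module ℝ E]
    [TopologicalSpace E] [ContinuousAdd E] [ContinuousSMul ℝ E]
    {s : Set E} {x₁ x₂ y : E} {c : ℝ} (g : E →ₗ[ℝ] ℝ) (hle : ∀ x ∈ s, g x ≤ c)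
    (hx₁ : x₁ ∈ s) (hx₂ : x₂ ∈ s) (hlt : g x₂ < g x₁) (hy : y ∈ intrinsicInterior ℝ s) :
    g y < c := by
  refine (hle y (intrinsicInterior_subset hy)).lt_of_ne fun hyc => ?_
  obtain ⟨z, hz, rfl⟩ := hy
  have hw : x₁ - x₂ ∈ (affineSpan ℝ s).direction := by
    rw [direction_affineSpan]
    exact vsub_mem_vectorSpan ℝ hx₁ hx₂
  let line : ℝ → affineSpan ℝ s := fun t =>
    ⟨t • (x₁ - x₂) + z, AffineSubspace.vadd_mem_of_mem_direction
      (Submodule.smul_mem _ t hw) z.2⟩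
  have hline : Continuous line := by fun_prop
  have hnhds : ∀ᶠ t in 𝓝[>] (0 : ℝ), line t ∈ ((↑) ⁻¹' s : Set (affineSpan ℝ s)) := by
    refine nhdsWithin_le_nhds (hline.tendsto' 0 z ?_ |>.eventually
      (mem_interior_iff_mem_nhds.1 hz))
    ext; simp [line]
  obtain ⟨t, hts, ht⟩ := (hnhds.and self_mem_nhdsWithin).exists
  have := hle _ hts
  simp only [line, map_add, map_smul, map_sub, smul_eq_mul] at this
  linarith [mul_pos ht (sub_pos.2 hlt)]

theorem List.Nodup.mem_of_length_eq_card {α : Type*} [Fintype α] [DecidableEq α] {L : List α}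
    (hL : L.Nodup) (hlen : L.length = Fintype.card α) (x : α) : x ∈ L := by
  have : L.toFinset = Finset.univ :=
    Finset.eq_univ_of_card _ (by rw [List.toFinset_card_of_nodup hL, hlen])
  rw [← List.mem_toFinset, this]
  exact Finset.mem_univ x

theorem nodup_four_iff {i j k l : Fin 4} :
    [i, j, k, l].Nodup ↔ i ≠ j ∧ i ≠ k ∧ i ≠ l ∧ j ≠ k ∧ j ≠ l ∧ k ≠ l := by
  simp [and_assoc]

theorem exists_nodup_fourth :
    ∀ i j k : Fin 4, i ≠ j → i ≠ k → j ≠ k → ∃ l, [i, j, k, l].Nodup := by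
  decide

theorem eq_or_eq_or_eq_or_eq_of_nodup {i j k l : Fin 4} (h : [i, j, k, l].Nodup) (m : Fin 4) :
    m = i ∨ m = j ∨ m = k ∨ m = l := by
  simpa using h.mem_of_length_eq_card rfl m

theorem mem_of_nodup_of_ne {i j k l : Fin 4} (h : [i, j, k, l].Nodup) {m : Fin 4} (hm : m ≠ l) :
    m ∈ [i, j, k] := by
  rcases eq_or_eq_or_eq_or_eq_of_nodup h m with rfl | rfl | rfl | rfl <;> simp_all

theorem eq_of_lt_chain_of_mem {α β : Type*} [LinearOrder β] {f : α → β} {i j k p q r : α}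
    (hp : p ∈ [i, j, k]) (hq : q ∈ [i, j, k]) (hr : r ∈ [i, j, k])
    (hkj : f k < f j) (hji : f j < f i) (hrq : f r < f q) (hqp : f q < f p) :
    p = i ∧ q = j ∧ r = k := by
  simp only [List.mem_cons, List.not_mem_nil, or_false] at hp hq hr
  rcases hp with rfl | rfl | rfl <;> rcases hq with rfl | rfl | rfl <;>
    rcases hr with rfl | rfl | rfl <;> first | exact ⟨rfl, rfl, rfl⟩ | order

theorem ee4_apply (i m : Fin 4) : ee4 i m = if m = i then 1 else 0 := by
  simp [ee4]

theorem ones4_apply (m : Fin 4) : ones4 m = 1 := by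
  simp [ones4, ee4_apply]

theorem isLinearMap_proj4 : IsLinearMap ℝ proj4 where
  map_add x y := by
    simp only [proj4, PiLp.add_apply, Finset.sum_add_distrib]
    module
  map_smul c x := by
    simp only [proj4, PiLp.smul_apply, smul_eq_mul, ← Finset.mul_sum]
    module

theorem proj4_apply_sub_apply (v : E4) (m n : Fin 4) : proj4 v m - proj4 v n = v m - v n := by
  simp [proj4, ones4_apply]

theorem proj4_ones4 : proj4 ones4 = 0 := by
  simp [proj4, ones4_apply]

theorem proj4_add (u v : E4) : proj4 (u + v) = proj4 u + proj4 v := isLinearMap_proj4.map_add u v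

theorem proj4_smul (c : ℝ) (v : E4) : proj4 (c • v) = c • proj4 v := isLinearMap_proj4.map_smul c v

theorem proj4_add_smul_ones4 (v : E4) (c : ℝ) : proj4 (v + c • ones4) = proj4 v := by
  rw [proj4_add, proj4_smul, proj4_ones4, smul_zero, add_zero]

theorem flat4_eq_convexHull (a : Fin 4 → ℤ) (i j k : Fin 4) :
    flat4 a i j k = convexHull ℝ {proj4 (toE4 a), proj4 (toE4 a + ee4 i),
      proj4 (toE4 a + ee4 i + ee4 j), proj4 (toE4 a + ee4 i + ee4 j + ee4 k)} := by
  simp only [flat4, slant4, isLinearMap_proj4.image_convexHull, Set.image_insert_eq,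
    Set.image_singleton]

theorem toE4_add_const (a : Fin 4 → ℤ) (n : ℤ) :
    toE4 (fun m => a m + n) = toE4 a + (n : ℝ) • ones4 := by
  ext m
  simp [toE4, ones4_apply]

theorem flat4_add_const (a : Fin 4 → ℤ) (n : ℤ) (i j k : Fin 4) :
    flat4 (fun m => a m + n) i j k = flat4 a i j k := by
  simp only [flat4_eq_convexHull, toE4_add_const, proj4_add, proj4_smul, proj4_ones4,
    smul_zero, add_zero]

theorem sum_ee4_of_nodup {i j k l : Fin 4} (h : [i, j, k, l].Nodup) :
    ee4 i + ee4 j + ee4 k + ee4 l = ones4 := by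
  have huniv : Finset.univ = [i, j, k, l].toFinset := by
    ext m
    simp only [Finset.mem_univ, List.mem_toFinset, true_iff]
    exact h.mem_of_length_eq_card rfl m
  rw [ones4, huniv, List.sum_toFinset _ h]
  simp [add_assoc]

theorem toE4_sub_single (a : Fin 4 → ℤ) (l : Fin 4) :
    toE4 (a - Pi.single l 1) = toE4 a - ee4 l := by
  ext m
  by_cases hm : m = l <;> simp [toE4, ee4_apply, hm]

theorem flat4_rotate {a : Fin 4 → ℤ} {i j k l : Fin 4} (h : [i, j, k, l].Nodup) :
    flat4 a i j k = flat4 (a - Pi.single l 1) l i j := by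
  have hl : toE4 a - ee4 l = toE4 a + ee4 i + ee4 j + ee4 k + (-1 : ℝ) • ones4 := by
    rw [← sum_ee4_of_nodup h]
    module
  rw [flat4_eq_convexHull, flat4_eq_convexHull, toE4_sub_single, sub_add_cancel, hl,
    proj4_add_smul_ones4]
  congr 1
  ext x
  simp only [Set.mem_insert_iff, Set.mem_singleton_iff]
  tauto

theorem mem_flat4_sub_le {a : Fin 4 → ℤ} {i j k l : Fin 4} (h : [i, j, k, l].Nodup)
    {x : E4} (hx : x ∈ flat4 a i j k) :
    x l - x k ≤ a l - a k ∧ x k - x j ≤ a k - a j ∧ x j - x i ≤ a j - a i ∧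
      x i - x l ≤ a i - a l + 1 := by
  obtain ⟨hij, hik, hil, hjk, hjl, hkl⟩ := nodup_four_iff.1 h
  have halfSpace (m n : Fin 4) (c : ℝ) : Convex ℝ {x : E4 | x m - x n ≤ c} :=
    convex_halfSpace_le (EuclideanSpace.proj m - EuclideanSpace.proj n : E4 →L[ℝ] ℝ).isLinear c
  rw [flat4_eq_convexHull] at hx
  refine convexHull_min ?_ ((halfSpace l k _).inter ((halfSpace k j _).inter
    ((halfSpace j i _).inter (halfSpace i l _)))) hx
  rintro _ (rfl | rfl | rfl | rfl) <;> refine ⟨?_, ?_, ?_, ?_⟩ <;>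
    simp only [Set.mem_ofPred_eq, proj4_apply_sub_apply] <;>
    simp [toE4, ee4_apply, hij, hik, hjk, hij.symm, hik.symm, hil.symm, hjk.symm, hjl.symm,
      hkl.symm] <;>
    linarith

theorem mem_intrinsicInterior_flat4_sub_lt {a : Fin 4 → ℤ} {i j k l : Fin 4}
    (h : [i, j, k, l].Nodup) {y : E4} (hy : y ∈ intrinsicInterior ℝ (flat4 a i j k)) :
    y l - y k < a l - a k ∧ y k - y j < a k - a j ∧ y j - y i < a j - a i ∧
      y i - y l < a i - a l + 1 := by
  obtain ⟨hij, hik, hil, hjk, hjl, hkl⟩ := nodup_four_iff.1 h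
  have hvert (v : E4) (hv : v ∈ ({toE4 a, toE4 a + ee4 i, toE4 a + ee4 i + ee4 j,
      toE4 a + ee4 i + ee4 j + ee4 k} : Set E4)) : proj4 v ∈ flat4 a i j k :=
    ⟨v, subset_convexHull ℝ _ hv, rfl⟩
  have hle (x : E4) (hx : x ∈ flat4 a i j k) := mem_flat4_sub_le h hx
  have key (m n : Fin 4) (c : ℝ) (hmn : ∀ x ∈ flat4 a i j k, x m - x n ≤ c) (u v : E4) (hu) (hv)
      (huv : v m - v n < u m - u n) : y m - y n < c :=
    lt_of_mem_intrinsicInterior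
      (EuclideanSpace.proj m - EuclideanSpace.proj n : E4 →L[ℝ] ℝ).toLinearMap
      hmn (hvert u hu) (hvert v hv) (by simpa [proj4_apply_sub_apply] using huv) hy
  refine ⟨key l k _ (fun x hx => (hle x hx).1) (toE4 a) (toE4 a + ee4 i + ee4 j + ee4 k)
      (by simp) (by simp) ?_,
    key k j _ (fun x hx => (hle x hx).2.1) (toE4 a + ee4 i + ee4 j + ee4 k)
      (toE4 a + ee4 i + ee4 j) (by simp) (by simp) ?_,
    key j i _ (fun x hx => (hle x hx).2.2.1) (toE4 a + ee4 i + ee4 j) (toE4 a + ee4 i)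
      (by simp) (by simp) ?_,
    key i l _ (fun x hx => (hle x hx).2.2.2) (toE4 a + ee4 i) (toE4 a) (by simp) (by simp) ?_⟩ <;>
    simp [toE4, ee4_apply, hij, hjk, hij.symm, hik.symm, hil.symm, hjk.symm, hjl.symm,
      hkl.symm]

theorem flat4_eq_of_mem_intrinsicInterior {a b : Fin 4 → ℤ} {i j k p q r l : Fin 4}
    (h₁ : [i, j, k, l].Nodup) (h₂ : [p, q, r, l].Nodup) {y : E4}
    (hy₁ : y ∈ intrinsicInterior ℝ (flat4 a i j k))
    (hy₂ : y ∈ intrinsicInterior ℝ (flat4 b p q r)) :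
    flat4 a i j k = flat4 b p q r := by
  obtain ⟨d₁, d₂, d₃, d₄⟩ := mem_intrinsicInterior_flat4_sub_lt h₁ hy₁
  obtain ⟨e₁, e₂, e₃, e₄⟩ := mem_intrinsicInterior_flat4_sub_lt h₂ hy₂
  have hab (m : Fin 4) : (y m - a m) - (y l - a l) = (y m - b m) - (y l - b l) := by
    have ha : 0 ≤ (y m - a m) - (y l - a l) ∧ (y m - a m) - (y l - a l) < 1 := by
      rcases eq_or_eq_or_eq_or_eq_of_nodup h₁ m with rfl | rfl | rfl | rfl <;>
        constructor <;> linarith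
    have hb : 0 ≤ (y m - b m) - (y l - b l) ∧ (y m - b m) - (y l - b l) < 1 := by
      rcases eq_or_eq_or_eq_or_eq_of_nodup h₂ m with rfl | rfl | rfl | rfl <;>
        constructor <;> linarith
    rw [← Int.fract_eq_self.2 ha, ← Int.fract_eq_self.2 hb, Int.fract_eq_fract]
    exact ⟨b m - b l - (a m - a l), by push_cast; ring⟩
  obtain ⟨-, -, hpl, -, hql, hrl⟩ := nodup_four_iff.1 h₂
  obtain ⟨rfl, rfl, rfl⟩ : p = i ∧ q = j ∧ r = k :=
    eq_of_lt_chain_of_mem (f := fun m => y m - a m) (mem_of_nodup_of_ne h₁ hpl)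
      (mem_of_nodup_of_ne h₁ hql) (mem_of_nodup_of_ne h₁ hrl) (by linarith) (by linarith)
      (by linarith [hab q, hab r]) (by linarith [hab p, hab q])
  have hb : b = fun m => a m + (b l - a l) := by
    funext m
    have : (b m : ℝ) = a m + (b l - a l) := by linarith [hab m]
    exact_mod_cast this
  rw [hb, flat4_add_const]

theorem exists_flat4_eq_of_nodup {a : Fin 4 → ℤ} {i j k l : Fin 4} (h : [i, j, k, l].Nodup)
    (m : Fin 4) : ∃ a' i' j' k', [i', j', k', m].Nodup ∧ flat4 a i j k = flat4 a' i' j' k' := by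
  have h₁ : [l, i, j, k].Nodup := (List.nodup_rotate (n := 3)).2 h
  have h₂ : [k, l, i, j].Nodup := (List.nodup_rotate (n := 2)).2 h
  have h₃ : [j, k, l, i].Nodup := (List.nodup_rotate (n := 1)).2 h
  rcases eq_or_eq_or_eq_or_eq_of_nodup h m with rfl | rfl | rfl | rfl
  · exact ⟨_, _, _, _, h₃, (flat4_rotate h).trans ((flat4_rotate h₁).trans (flat4_rotate h₂))⟩
  · exact ⟨_, _, _, _, h₂, (flat4_rotate h).trans (flat4_rotate h₁)⟩
  · exact ⟨_, _, _, _, h₁, flat4_rotate h⟩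
  · exact ⟨a, i, j, k, h, rfl⟩

/-- distinct flat tetrahedrons have disjoint relative interiors
(interiors within the 3-dimensional hyperplane H). -/
theorem stmt12 (a b : Fin 4 → ℤ) (i j k p q r : Fin 4)
    (hij : i ≠ j) (hik : i ≠ k) (hjk : j ≠ k)
    (hpq : p ≠ q) (hpr : p ≠ r) (hqr : q ≠ r)
    (hne : flat4 a i j k ≠ flat4 b p q r) :
    Disjoint (intrinsicInterior ℝ (flat4 a i j k))
      (intrinsicInterior ℝ (flat4 b p q r)) := by
  obtain ⟨l, hl⟩ := exists_nodup_fourth i j k hij hik hjk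
  obtain ⟨l', hl'⟩ := exists_nodup_fourth p q r hpq hpr hqr
  obtain ⟨a', i', j', k', h', heq⟩ := exists_flat4_eq_of_nodup (a := a) hl l'
  rw [heq] at hne ⊢
  exact Set.disjoint_left.2 fun y hy₁ hy₂ =>
    hne (flat4_eq_of_mem_intrinsicInterior h' hl' hy₁ hy₂)
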